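/- arXiv:1209.3201 — 3 statements merged into one kernel-verified Lean document; each statement's English description precedes it below -/
import Mathlib

section
/- The sequence of coefficients of (1 + x + ... + x^n)^d is log-concave: for all 1 ≤ k ≤ nd - 1, C_n(d,k)^2 ≥ C_n(d,k-1) · C_n(d,k+1), where C_n(d,k) is the coefficient of x^k. -/
/-!
Extend the coefficient sequence of a polynomial by zero to all of `ℤ`. The sequence `c` of
`(1 + x + ⋯ + x^n)^d` satisfies `c (k - 1) * c (l + 1) ≤ c k * c l` for all `k ≤ l`, not only for
`k = l`; this stronger form is equivalent to `c p' * c q' ≤ c p * c q` whenever `[p, q]` lies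
inside `[p', q']` with the same midpoint. It holds for `d = 0`, and multiplying by `1 + x + ⋯ + x^n`
replaces `c` by its window sums `m ↦ c m + ⋯ + c (m - n)`. Splitting off the first and last terms of
the four window sums involved, the cross terms compare pairwise by the nested-interval inequality.
-/

open Polynomial Finset

section PolyaFrequencyTwo

variable {R : Type*} [CommSemiring R] [PartialOrder R]

/-- For nonnegative sequences this is Pólya frequency of order two, i.e. log-concavity without
internal zeros. -/
def IsPolyaFrequencyTwo (f : ℤ → R) : Prop :=
  ∀ k l : ℤ, k ≤ l → f (k - 1) * f (l + 1) ≤ f k * f l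

namespace IsPolyaFrequencyTwo

variable {f : ℤ → R}

theorem mul_sub_add_le (hf : IsPolyaFrequencyTwo f) {p q : ℤ} (hpq : p ≤ q) (m : ℕ) :
    f (p - m) * f (q + m) ≤ f p * f q := by
  induction m with
  | zero => simp
  | succ m ih =>
    calc f (p - ↑(m + 1)) * f (q + ↑(m + 1)) = f (p - m - 1) * f (q + m + 1) := by
          rw [Nat.cast_succ, sub_sub, add_assoc]
      _ ≤ f (p - m) * f (q + m) := hf _ _ (by omega)
      _ ≤ f p * f q := ih

theorem mul_le_mul_of_le_of_add_eq (hf : IsPolyaFrequencyTwo f) {p q p' q' : ℤ} (hp : p' ≤ p)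
    (hq : p' ≤ q) (h : p + q = p' + q') : f p' * f q' ≤ f p * f q := by
  wlog hpq : p ≤ q generalizing p q
  · rw [mul_comm (f p)]
    exact this hq hp (by omega) (by omega)
  obtain ⟨m, rfl⟩ : ∃ m : ℕ, p' = p - m := ⟨(p - p').toNat, by omega⟩
  obtain rfl : q' = q + m := by omega
  exact hf.mul_sub_add_le hpq m

theorem windowSum [IsOrderedRing R] (hf : IsPolyaFrequencyTwo f) (n : ℕ) :
    IsPolyaFrequencyTwo fun m => ∑ i ∈ range (n + 1), f (m - i) := by
  intro k l hkl
  set a := ∑ i ∈ range n, f (k - 1 - i)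
  set b := ∑ i ∈ range n, f (l - i)
  have hk : ∑ i ∈ range (n + 1), f (k - i) = a + f k := by
    rw [sum_range_succ']
    congr 1
    · exact sum_congr rfl fun i _ => by push_cast; ring_nf
    · simp
  have hl : ∑ i ∈ range (n + 1), f (l + 1 - i) = b + f (l + 1) := by
    rw [sum_range_succ']
    congr 1
    · exact sum_congr rfl fun i _ => by push_cast; ring_nf
    · simp
  dsimp only
  rw [hk, hl, sum_range_succ, sum_range_succ]
  have hxb : f (k - 1 - n) * b ≤ a * f (l - n) := by
    rw [mul_sum, sum_mul]
    refine sum_le_sum fun i hi => ?_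
    have hin : i < n := mem_range.1 hi
    exact hf.mul_le_mul_of_le_of_add_eq (by omega) (by omega) (by ring)
  have hay : a * f (l + 1) ≤ f k * b := by
    rw [mul_sum, sum_mul]
    exact sum_le_sum fun i _ => hf.mul_le_mul_of_le_of_add_eq (by omega) (by omega) (by ring)
  have hxy : f (k - 1 - n) * f (l + 1) ≤ f k * f (l - n) :=
    hf.mul_le_mul_of_le_of_add_eq (by omega) (by omega) (by ring)
  calc (a + f (k - 1 - n)) * (b + f (l + 1))
      = a * b + (f (k - 1 - n) * b + a * f (l + 1) + f (k - 1 - n) * f (l + 1)) := by ring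
    _ ≤ a * b + (a * f (l - n) + f k * b + f k * f (l - n)) := by gcongr
    _ = (a + f k) * (b + f (l - n)) := by ring

end IsPolyaFrequencyTwo

end PolyaFrequencyTwo

namespace Polynomial

section Semiring

variable {R : Type*} [Semiring R]

noncomputable def coeffInt (p : R[X]) (m : ℤ) : R :=
  if 0 ≤ m then p.coeff m.toNat else 0

@[simp]
theorem coeffInt_natCast (p : R[X]) (k : ℕ) : p.coeffInt k = p.coeff k := by
  simp [coeffInt]

theorem coeffInt_mul_sum_X_pow (p : R[X]) (n : ℕ) (m : ℤ) :
    (p * ∑ i ∈ range (n + 1), X ^ i).coeffInt m = ∑ i ∈ range (n + 1), p.coeffInt (m - i) := by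
  by_cases hm : 0 ≤ m
  · lift m to ℕ using hm
    simp only [coeffInt_natCast, mul_sum, finsetSum_coeff, coeff_mul_X_pow']
    refine sum_congr rfl fun i _ => ?_
    unfold coeffInt
    split_ifs <;> first | rfl | omega | (congr 1; omega)
  · simp only [coeffInt, hm, if_false]
    exact (sum_eq_zero fun i _ => if_neg (by omega)).symm

end Semiring

section OrderedSemiring

variable {R : Type*} [CommSemiring R] [PartialOrder R] [IsOrderedRing R]

theorem isPolyaFrequencyTwo_coeffInt_one : IsPolyaFrequencyTwo (1 : R[X]).coeffInt := by
  intro k l hkl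
  simp only [coeffInt, coeff_one]
  split_ifs <;> first | omega | simp

theorem isPolyaFrequencyTwo_coeffInt_sum_X_pow_pow (n d : ℕ) :
    IsPolyaFrequencyTwo ((∑ i ∈ range (n + 1), X ^ i : R[X]) ^ d).coeffInt := by
  induction d with
  | zero => simpa using isPolyaFrequencyTwo_coeffInt_one
  | succ d ih =>
    rw [pow_succ, _root_.funext (coeffInt_mul_sum_X_pow _ n)]
    exact ih.windowSum n

end OrderedSemiring

end Polynomial

theorem coeff_log_concave_general (n d k : ℕ) (hk1 : 1 ≤ k) :
    ((∑ i ∈ Finset.range (n + 1), (Polynomial.X : Polynomial ℕ) ^ i) ^ d).coeff (k - 1) *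
        ((∑ i ∈ Finset.range (n + 1), (Polynomial.X : Polynomial ℕ) ^ i) ^ d).coeff (k + 1) ≤
      ((∑ i ∈ Finset.range (n + 1), (Polynomial.X : Polynomial ℕ) ^ i) ^ d).coeff k ^ 2 := by
  have h := isPolyaFrequencyTwo_coeffInt_sum_X_pow_pow (R := ℕ) n d k k le_rfl
  rw [show (k : ℤ) - 1 = (k - 1 : ℕ) by omega, show (k : ℤ) + 1 = (k + 1 : ℕ) by omega] at h
  simpa only [coeffInt_natCast, sq] using h

theorem coeff_log_concave (n d k : ℕ) (hn : 1 ≤ n) (hd : 1 ≤ d)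
    (hk1 : 1 ≤ k) (hk2 : k ≤ n * d - 1) :
    ((∑ i ∈ Finset.range (n + 1), (Polynomial.X : Polynomial ℕ) ^ i) ^ d).coeff (k - 1) *
        ((∑ i ∈ Finset.range (n + 1), (Polynomial.X : Polynomial ℕ) ^ i) ^ d).coeff (k + 1) ≤
      ((∑ i ∈ Finset.range (n + 1), (Polynomial.X : Polynomial ℕ) ^ i) ^ d).coeff k ^ 2 :=
  coeff_log_concave_general n d k hk1
end

section
/- The sequence of coefficients of (1 + x + ... + x^n)^d is unimodal with maximum at k = ⌊nd/2⌋: C_n(d,k) ≤ C_n(d,k+1) for all 0 ≤ k < ⌊nd/2⌋, and C_n(d,k) ≥ C_n(d,k+1) for all ⌊nd/2⌋ ≤ k < nd. -/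
/-!
Extend the coefficients of a polynomial by zero to a function on `ℤ`. Multiplying by
`1 + X + ⋯ + X^n` replaces this function `f` by its window sums `k ↦ ∑_{i ≤ n} f (k - i)`, and
this preserves being symmetric (`f (m - k) = f k`) and nondecreasing up to `⌊m / 2⌋`, with `m`
becoming `m + n`: a step `k ↦ k + 1` of the window sum trades `f (k - n)` for `f (k + 1)`, and
the latter is at least as close to the centre `m / 2` as long as `2 (k + 1) ≤ m + n`. Induction
on `d`, starting from `1`, gives the claim with `m = n d`.
-/

open Polynomial Finset

structure IsSymmUnimodal {M : Type*} [Preorder M] (m : ℤ) (f : ℤ → M) : Prop where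
  symm : ∀ k, f (m - k) = f k
  monotoneOn : MonotoneOn f (Set.Iic (m / 2))

namespace IsSymmUnimodal

section Preorder

variable {M : Type*} [Preorder M] {m : ℤ} {f : ℤ → M}

theorem le_of_le_of_le_sub (hf : IsSymmUnimodal m f) {j i : ℤ} (hji : j ≤ i)
    (him : i ≤ m - j) : f j ≤ f i := by
  by_cases hi : i ≤ m / 2
  · exact hf.monotoneOn (by simp only [Set.mem_Iic]; omega) hi hji
  · rw [← hf.symm i]
    exact hf.monotoneOn (by simp only [Set.mem_Iic]; omega) (by simp only [Set.mem_Iic]; omega)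
      (by omega)

theorem antitoneOn (hf : IsSymmUnimodal m f) : AntitoneOn f (Set.Ici (m / 2)) := by
  intro a ha b hb hab
  simp only [Set.mem_Ici] at ha hb
  rcases hab.eq_or_lt with rfl | hlt
  · exact le_rfl
  · rw [← hf.symm b]
    exact hf.le_of_le_of_le_sub (by omega) (by omega)

end Preorder

variable {M : Type*} [AddCommMonoid M] [PartialOrder M] [IsOrderedAddMonoid M]
  {m : ℤ} {f : ℤ → M}

theorem sum_range_sub (hf : IsSymmUnimodal m f) (n : ℕ) :
    IsSymmUnimodal (m + n) (fun k => ∑ i ∈ range (n + 1), f (k - i)) := by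
  refine ⟨fun k => ?_, ?_⟩
  · rw [← sum_range_reflect]
    refine sum_congr rfl fun i hi => ?_
    rw [mem_range] at hi
    rw [← hf.symm]
    congr 1
    push_cast [Nat.cast_sub (Nat.le_of_lt_succ hi)]
    ring
  · refine monotoneOn_of_le_succ Set.ordConnected_Iic fun k _ _ hk => ?_
    simp only [Order.succ_eq_add_one, Set.mem_Iic] at hk ⊢
    rw [sum_range_succ, sum_range_succ']
    simp only [Nat.cast_add, Nat.cast_one, Nat.cast_zero, sub_zero, add_sub_add_right_eq_sub]
    exact add_le_add_right (hf.le_of_le_of_le_sub (by omega) (by omega)) _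

end IsSymmUnimodal

section intCoeff

variable {R : Type*} [Semiring R]

noncomputable def intCoeff (p : R[X]) (k : ℤ) : R :=
  if 0 ≤ k then p.coeff k.toNat else 0

@[simp]
theorem intCoeff_natCast (p : R[X]) (k : ℕ) : intCoeff p k = p.coeff k := by
  simp [intCoeff]

theorem intCoeff_one (k : ℤ) : intCoeff (1 : R[X]) k = if k = 0 then 1 else 0 := by
  unfold intCoeff
  split_ifs <;> simp_all [coeff_one]; omega

theorem intCoeff_mul_geomSum (p : R[X]) (n : ℕ) (k : ℤ) :
    intCoeff (p * ∑ i ∈ range (n + 1), X ^ i) k = ∑ i ∈ range (n + 1), intCoeff p (k - i) := by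
  unfold intCoeff
  split_ifs with hk
  · rw [mul_sum, finsetSum_coeff]
    refine sum_congr rfl fun i _ => ?_
    rw [coeff_mul_X_pow']
    split_ifs <;> first | rfl | omega | (congr 1; omega)
  · exact (sum_eq_zero fun i _ => if_neg (by omega)).symm

end intCoeff

section OrderedSemiring

variable {R : Type*} [Semiring R] [PartialOrder R] [IsOrderedRing R]

theorem isSymmUnimodal_intCoeff_one :
    IsSymmUnimodal 0 (intCoeff (1 : R[X])) := by
  refine ⟨fun k => ?_, fun j _ k hk hjk => ?_⟩
  · simp only [intCoeff_one, zero_sub, neg_eq_zero]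
  · simp only [Set.mem_Iic] at hk
    simp only [intCoeff_one]
    split_ifs <;> first | exact le_rfl | exact zero_le_one | omega

theorem isSymmUnimodal_intCoeff_geomSum_pow (n d : ℕ) :
    IsSymmUnimodal (n * d : ℕ) (intCoeff ((∑ i ∈ range (n + 1), (X : R[X]) ^ i) ^ d)) := by
  induction d with
  | zero => simpa using isSymmUnimodal_intCoeff_one
  | succ d ih =>
    have hcentre : (((n * (d + 1) : ℕ) : ℤ)) = (n * d : ℕ) + n := by push_cast; ring
    rw [hcentre, pow_succ, _root_.funext (intCoeff_mul_geomSum _ n)]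
    exact ih.sum_range_sub n

end OrderedSemiring

theorem coeff_unimodal_general (n d : ℕ) :
    (∀ k, k < n * d / 2 →
      ((∑ i ∈ Finset.range (n + 1), (Polynomial.X : Polynomial ℕ) ^ i) ^ d).coeff k ≤
        ((∑ i ∈ Finset.range (n + 1), (Polynomial.X : Polynomial ℕ) ^ i) ^ d).coeff (k + 1)) ∧
    (∀ k, n * d / 2 ≤ k → k < n * d →
      ((∑ i ∈ Finset.range (n + 1), (Polynomial.X : Polynomial ℕ) ^ i) ^ d).coeff (k + 1) ≤
        ((∑ i ∈ Finset.range (n + 1), (Polynomial.X : Polynomial ℕ) ^ i) ^ d).coeff k) := by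
  have hp := isSymmUnimodal_intCoeff_geomSum_pow (R := ℕ) n d
  have hsucc (k : ℕ) : (k : ℤ) ≤ (k + 1 : ℕ) := by omega
  refine ⟨fun k hk => ?_, fun k hk _ => ?_⟩
  · simpa only [intCoeff_natCast] using
      hp.monotoneOn (by simp only [Set.mem_Iic]; omega) (by simp only [Set.mem_Iic]; omega)
        (hsucc k)
  · simpa only [intCoeff_natCast] using
      hp.antitoneOn (by simp only [Set.mem_Ici]; omega) (by simp only [Set.mem_Ici]; omega)
        (hsucc k)

theorem coeff_unimodal (n d : ℕ) (hn : 1 ≤ n) (hd : 1 ≤ d) :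
    (∀ k, k < n * d / 2 →
      ((∑ i ∈ Finset.range (n + 1), (Polynomial.X : Polynomial ℕ) ^ i) ^ d).coeff k ≤
        ((∑ i ∈ Finset.range (n + 1), (Polynomial.X : Polynomial ℕ) ^ i) ^ d).coeff (k + 1)) ∧
    (∀ k, n * d / 2 ≤ k → k < n * d →
      ((∑ i ∈ Finset.range (n + 1), (Polynomial.X : Polynomial ℕ) ^ i) ^ d).coeff (k + 1) ≤
        ((∑ i ∈ Finset.range (n + 1), (Polynomial.X : Polynomial ℕ) ^ i) ^ d).coeff k) :=
  coeff_unimodal_general n d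
end

section
/- For n ≥ 1, the bandwidth of the grid graph P_n^2 (the (n+1)×(n+1) grid) is at most n + 1, witnessed by the Hales (graded reverse lexicographic / antidiagonal) labeling. -/
open Finset

/-- Size of antidiagonal `t` in the `(n+1) × (n+1)` grid. -/
def gridDiag (n t : ℕ) : ℕ := min n t + 1 - (t - n)

/-- Number of grid points with weight `< s`. -/
def gridT (n s : ℕ) : ℕ := ∑ t ∈ range s, gridDiag n t

/-- Hales rank of the point `(a, b)`. -/
def gridRank (n a b : ℕ) : ℕ := gridT n (a + b) + (a - (a + b - n))

lemma gridT_succ (n s : ℕ) : gridT n (s + 1) = gridT n s + gridDiag n s :=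
  Finset.sum_range_succ _ _

lemma gridT_mono (n : ℕ) {s s' : ℕ} (h : s ≤ s') : gridT n s ≤ gridT n s' :=
  Finset.sum_le_sum_of_subset (Finset.range_subset_range.2 h)

lemma gridRank_lt_T (n a b : ℕ) (ha : a ≤ n) (hb : b ≤ n) :
    gridRank n a b < gridT n (a + b + 1) := by
  rw [gridT_succ]
  unfold gridRank gridDiag
  have : a - (a + b - n) < min n (a + b) + 1 - (a + b - n) := by omega
  omega

lemma gridT_total (n : ℕ) : gridT n (2 * n + 2) = (n + 1) * (n + 1) := by
  unfold gridT
  have h : 2 * n + 2 = (n + 1) + (n + 1) := by ring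
  rw [h, Finset.sum_range_add]
  have h1 : ∑ t ∈ range (n + 1), gridDiag n t = (∑ t ∈ range (n + 1), t) + (n + 1) := by
    have e : ∑ t ∈ range (n + 1), gridDiag n t = ∑ t ∈ range (n + 1), (t + 1) := by
      apply Finset.sum_congr rfl
      intro t ht
      have := Finset.mem_range.1 ht
      unfold gridDiag
      omega
    rw [e, Finset.sum_add_distrib]
    simp
  have h2 : ∑ t ∈ range (n + 1), gridDiag n ((n + 1) + t) = ∑ t ∈ range (n + 1), (n - t) := by
    apply Finset.sum_congr rfl
    intro t ht
    have := Finset.mem_range.1 ht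
    unfold gridDiag
    omega
  have h3 : ∑ t ∈ range (n + 1), (n - t) = ∑ t ∈ range (n + 1), t := by
    have := Finset.sum_range_reflect (fun j => j) (n + 1)
    rw [← this]
    apply Finset.sum_congr rfl
    intro t ht
    have := Finset.mem_range.1 ht
    omega
  have h4 : (∑ t ∈ range (n + 1), t) * 2 = (n + 1) * n := by
    have := Finset.sum_range_id_mul_two (n + 1)
    simpa using this
  rw [h1, h2, h3]
  nlinarith [h4]

lemma gridRank_lt (n a b : ℕ) (ha : a ≤ n) (hb : b ≤ n) :
    gridRank n a b < (n + 1) * (n + 1) := by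
  rw [← gridT_total n]
  exact (gridRank_lt_T n a b ha hb).trans_le (gridT_mono n (by omega))

lemma gridRank_inj (n a b c d : ℕ) (ha : a ≤ n) (hb : b ≤ n) (hc : c ≤ n) (hd : d ≤ n)
    (h : gridRank n a b = gridRank n c d) : a = c ∧ b = d := by
  have hT1 : gridT n (a + b) ≤ gridRank n a b := Nat.le_add_right _ _
  have hT2 : gridT n (c + d) ≤ gridRank n c d := Nat.le_add_right _ _
  have hs : a + b = c + d := by
    rcases lt_trichotomy (a + b) (c + d) with h' | h' | h'
    · have := (gridRank_lt_T n a b ha hb).trans_le ((gridT_mono n (by omega)).trans hT2)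
      omega
    · exact h'
    · have := (gridRank_lt_T n c d hc hd).trans_le ((gridT_mono n (by omega)).trans hT1)
      omega
  unfold gridRank at h
  rw [hs] at h
  omega

lemma gridRank_step_right (n a b : ℕ) (ha : a + 1 ≤ n) (hb : b ≤ n) :
    gridRank n a b ≤ gridRank n (a + 1) b ∧
      gridRank n (a + 1) b ≤ gridRank n a b + (n + 1) := by
  unfold gridRank
  have hsum : a + 1 + b = (a + b) + 1 := by ring
  rw [hsum, gridT_succ]
  unfold gridDiag
  omega

lemma gridRank_step_up (n a b : ℕ) (ha : a ≤ n) (hb : b + 1 ≤ n) :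
    gridRank n a b ≤ gridRank n a (b + 1) ∧
      gridRank n a (b + 1) ≤ gridRank n a b + (n + 1) := by
  unfold gridRank
  have hsum : a + (b + 1) = (a + b) + 1 := by ring
  rw [hsum, gridT_succ]
  unfold gridDiag
  omega

theorem grid_bandwidth_le (n : ℕ) (hn : 1 ≤ n) :
    ∃ f : (Fin (n + 1) × Fin (n + 1)) ≃ Fin ((n + 1) * (n + 1)),
      ∀ u v : Fin (n + 1) × Fin (n + 1),
        (((u.1 : ℤ) - v.1).natAbs + ((u.2 : ℤ) - v.2).natAbs = 1) →
          ((f u : ℤ) - (f v : ℤ)).natAbs ≤ n + 1 := by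
  set g : Fin (n + 1) × Fin (n + 1) → Fin ((n + 1) * (n + 1)) :=
    fun u => ⟨gridRank n u.1 u.2,
      gridRank_lt n u.1 u.2 (Nat.lt_succ_iff.1 u.1.isLt) (Nat.lt_succ_iff.1 u.2.isLt)⟩
    with hg
  have hinj : Function.Injective g := by
    intro u v huv
    have h : gridRank n u.1 u.2 = gridRank n v.1 v.2 := by
      simpa [hg] using congrArg Fin.val huv
    obtain ⟨h1, h2⟩ := gridRank_inj n u.1 u.2 v.1 v.2
      (Nat.lt_succ_iff.1 u.1.isLt) (Nat.lt_succ_iff.1 u.2.isLt)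
      (Nat.lt_succ_iff.1 v.1.isLt) (Nat.lt_succ_iff.1 v.2.isLt) h
    exact Prod.ext (Fin.val_injective h1) (Fin.val_injective h2)
  have hbij : Function.Bijective g := by
    rw [Fintype.bijective_iff_injective_and_card]
    exact ⟨hinj, by simp⟩
  refine ⟨Equiv.ofBijective g hbij, ?_⟩
  intro u v huv
  rcases u with ⟨⟨a, ha⟩, ⟨b, hb⟩⟩
  rcases v with ⟨⟨c, hc⟩, ⟨d, hd⟩⟩
  have huv' : ((a : ℤ) - c).natAbs + ((b : ℤ) - d).natAbs = 1 := huv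
  show (((gridRank n a b : ℕ) : ℤ) - ((gridRank n c d : ℕ) : ℤ)).natAbs ≤ n + 1
  clear huv
  rename' huv' => huv
  have hcase : (a = c + 1 ∧ b = d) ∨ (c = a + 1 ∧ b = d) ∨
      (b = d + 1 ∧ a = c) ∨ (d = b + 1 ∧ a = c) := by omega
  have ha' : a ≤ n := by omega
  have hb' : b ≤ n := by omega
  have hc' : c ≤ n := by omega
  have hd' : d ≤ n := by omega
  rcases hcase with ⟨h1, h2⟩ | ⟨h1, h2⟩ | ⟨h1, h2⟩ | ⟨h1, h2⟩
  · subst h1; subst h2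
    have := gridRank_step_right n c b (by omega) hb'
    omega
  · subst h1; subst h2
    have := gridRank_step_right n a b (by omega) hb'
    omega
  · subst h1; subst h2
    have := gridRank_step_up n a d ha' (by omega)
    omega
  · subst h1; subst h2
    have := gridRank_step_up n a b ha' (by omega)
    omega
end
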